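/- arXiv:2010.13096 — 4 statements merged into one kernel-verified Lean document; each statement's English description precedes it below -/
import Mathlib

section
/- Suppose V : ℝ^n → ℝ is continuously differentiable, V(0) = 0, f(0) = 0, and there exists γ > 0 such that for all x with 0 < ‖x‖ ≤ γ we have V(x) > 0 and ⟨∇V(x), f(x)⟩ ≤ 0. Then the origin of the ODE x' = f(x) is Lyapunov stable: for all ε > 0 there exists δ > 0 such that every right-maximal solution x(t) on [0,T) with ‖x(0)‖ < δ satisfies ‖x(t)‖ < ε for all t ∈ [0,T). -/
open Set Filter Topology Metric
open scoped ENNReal RealInnerProductSpace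

noncomputable section

/-- The interval [0, T) of existence, with right endpoint `T : ℝ≥0∞`. -/
def Ico0 (T : ℝ≥0∞) : Set ℝ := {t | 0 ≤ t ∧ ENNReal.ofReal t < T}

/-- `x` solves the autonomous ODE x' = f(x) on [0, T). -/
def IsSolOn {n : ℕ} (f : EuclideanSpace ℝ (Fin n) → EuclideanSpace ℝ (Fin n))
    (x : ℝ → EuclideanSpace ℝ (Fin n)) (T : ℝ≥0∞) : Prop :=
  ∀ t ∈ Ico0 T, HasDerivAt x (f (x t)) t

/-- `x` is a right-maximal solution of x' = f(x) on [0, T):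
it is a solution, and there is no solution on a strictly larger interval agreeing with it. -/
def IsMaxSol {n : ℕ} (f : EuclideanSpace ℝ (Fin n) → EuclideanSpace ℝ (Fin n))
    (x : ℝ → EuclideanSpace ℝ (Fin n)) (T : ℝ≥0∞) : Prop :=
  IsSolOn f x T ∧ ∀ (y : ℝ → EuclideanSpace ℝ (Fin n)) (T' : ℝ≥0∞), T < T' → IsSolOn f y T' →
    ¬ (∀ t ∈ Ico0 T, y t = x t)

/-- The filter of times approaching the right endpoint `T` of the interval of existence. -/
def endFilter (T : ℝ≥0∞) : Filter ℝ :=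
  if T = ⊤ then atTop else 𝓝[<] T.toReal

/-! A Lyapunov function cannot increase along a trajectory, so a solution starting in the
sublevel set `{V < m}`, where `m > 0` is the minimum of `V` on a small sphere, can never reach
that sphere: at the first time it did, `V` would already be at least `m`. -/

theorem ContinuousOn.exists_first_hitting_time {g : ℝ → ℝ} {a b r : ℝ} (hab : a ≤ b)
    (hg : ContinuousOn g (Icc a b)) (ha : g a < r) (hb : r ≤ g b) :
    ∃ s ∈ Icc a b, g s = r ∧ ∀ v ∈ Ico a s, g v < r := by
  set S := Icc a b ∩ g ⁻¹' Ici r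
  have hSne : S.Nonempty := ⟨b, right_mem_Icc.2 hab, hb⟩
  have hSbdd : BddBelow S := ⟨a, fun v hv => hv.1.1⟩
  have hsS : sInf S ∈ S :=
    (hg.preimage_isClosed_of_isClosed isClosed_Icc isClosed_Ici).csInf_mem hSne hSbdd
  have hbefore : ∀ v ∈ Ico a (sInf S), g v < r := fun v hv => by
    by_contra! hrv
    have hvS : v ∈ S := ⟨⟨hv.1, hv.2.le.trans hsS.1.2⟩, hrv⟩
    exact (csInf_le hSbdd hvS).not_gt hv.2
  obtain ⟨w, hw, hgw⟩ := intermediate_value_Icc hsS.1.1 (hg.mono (Icc_subset_Icc_right hsS.1.2))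
    ⟨ha.le, hsS.2⟩
  have hws : w = sInf S :=
    le_antisymm hw.2 (csInf_le hSbdd ⟨⟨hw.1, hw.2.trans hsS.1.2⟩, hgw.ge⟩)
  exact ⟨sInf S, hsS.1, hws ▸ hgw, hbefore⟩

theorem antitoneOn_comp_of_inner_gradient_nonpos {E : Type*} [NormedAddCommGroup E]
    [InnerProductSpace ℝ E] [CompleteSpace E] {V : E → ℝ} {x x' : ℝ → E} {a b : ℝ}
    (hV : Differentiable ℝ V) (hx : ∀ u ∈ Icc a b, HasDerivAt x (x' u) u)
    (hdec : ∀ u ∈ Icc a b, ⟪gradient V (x u), x' u⟫ ≤ 0) :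
    AntitoneOn (fun u => V (x u)) (Icc a b) := by
  have hderiv : ∀ u ∈ Icc a b, HasDerivAt (fun s => V (x s)) ⟪gradient V (x u), x' u⟫ u :=
    fun u hu => by
      rw [inner_gradient_left]
      exact (hV (x u)).hasFDerivAt.comp_hasDerivAt u (hx u hu)
  apply antitoneOn_of_deriv_nonpos (convex_Icc a b)
  · exact fun u hu => (hderiv u hu).continuousAt.continuousWithinAt
  · exact fun u hu => (hderiv u (interior_subset hu)).differentiableAt.differentiableWithinAt
  · intro u hu
    rw [(hderiv u (interior_subset hu)).deriv]
    exact hdec u (interior_subset hu)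

theorem Icc_subset_Ico0 {T : ℝ≥0∞} {t : ℝ} (ht : t ∈ Ico0 T) : Icc 0 t ⊆ Ico0 T :=
  fun _ hu => ⟨hu.1, (ENNReal.ofReal_le_ofReal hu.2).trans_lt ht.2⟩

theorem IsSolOn.norm_lt_of_lyapunov {n : ℕ}
    {f : EuclideanSpace ℝ (Fin n) → EuclideanSpace ℝ (Fin n)} {V : EuclideanSpace ℝ (Fin n) → ℝ}
    {x : ℝ → EuclideanSpace ℝ (Fin n)} {T : ℝ≥0∞} {r m : ℝ}
    (hx : IsSolOn f x T) (hV : Differentiable ℝ V)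
    (hdec : ∀ y, ‖y‖ ≤ r → ⟪gradient V y, f y⟫ ≤ 0) (hm : ∀ y ∈ sphere 0 r, m ≤ V y)
    (hx0 : ‖x 0‖ < r) (hVx0 : V (x 0) < m) {t : ℝ} (ht : t ∈ Ico0 T) : ‖x t‖ < r := by
  by_contra! hrt
  have hsub := Icc_subset_Ico0 ht
  have hcont : ContinuousOn (fun u => ‖x u‖) (Icc 0 t) :=
    fun u hu => (hx u (hsub hu)).continuousAt.norm.continuousWithinAt
  obtain ⟨s, hs, hxs, hbefore⟩ := hcont.exists_first_hitting_time ht.1 hx0 hrt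
  have hinside : ∀ v ∈ Icc 0 s, ‖x v‖ ≤ r := fun v hv =>
    (eq_or_lt_of_le hv.2).elim (fun hvs => hvs ▸ hxs.le) (fun hvs => (hbefore v ⟨hv.1, hvs⟩).le)
  have hanti := antitoneOn_comp_of_inner_gradient_nonpos hV
    (fun v hv => hx v (hsub ⟨hv.1, hv.2.trans hs.2⟩)) (fun v hv => hdec _ (hinside v hv))
  have hVs : V (x s) ≤ V (x 0) := hanti (left_mem_Icc.2 hs.1) (right_mem_Icc.2 hs.1) hs.1
  have hmVs : m ≤ V (x s) := hm (x s) (mem_sphere_zero_iff_norm.2 hxs)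
  linarith

theorem stmt_1_general {n : ℕ} (f : EuclideanSpace ℝ (Fin n) → EuclideanSpace ℝ (Fin n))
    (V : EuclideanSpace ℝ (Fin n) → ℝ)
    (hV : ContDiff ℝ 1 V) (hV0 : V 0 = 0) (hf0 : f 0 = 0)
    (hlyap : ∃ γ > (0:ℝ), ∀ x : EuclideanSpace ℝ (Fin n), 0 < ‖x‖ → ‖x‖ ≤ γ →
      0 < V x ∧ ⟪gradient V x, f x⟫ ≤ 0) :
    ∀ ε > (0:ℝ), ∃ δ > (0:ℝ), ∀ (x : ℝ → EuclideanSpace ℝ (Fin n)) (T : ℝ≥0∞),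
      IsMaxSol f x T → ‖x 0‖ < δ → ∀ t ∈ Ico0 T, ‖x t‖ < ε := by
  obtain ⟨γ, hγ, hly⟩ := hlyap
  intro ε hε
  set r := min ε γ
  have hr : 0 < r := lt_min hε hγ
  have hdec : ∀ y, ‖y‖ ≤ r → ⟪gradient V y, f y⟫ ≤ 0 := fun y hy => by
    rcases (norm_nonneg y).eq_or_lt with hy0 | hy0
    · simp [norm_eq_zero.1 hy0.symm, hf0]
    · exact (hly y hy0 (hy.trans (min_le_right _ _))).2
  obtain ⟨m, hm, hVm⟩ := (isCompact_sphere (0 : EuclideanSpace ℝ (Fin n)) r).exists_forall_le'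
    hV.continuous.continuousOn fun y hy => by
      rw [mem_sphere_zero_iff_norm] at hy
      exact (hly y (hy ▸ hr) (hy ▸ min_le_right _ _)).1
  obtain ⟨δ₀, hδ₀, hball⟩ := Metric.mem_nhds_iff.1 <|
    hV.continuous.continuousAt (x := 0) (Iio_mem_nhds (hV0 ▸ hm))
  refine ⟨min δ₀ r, lt_min hδ₀ hr, fun x T hx hx0 t ht => ?_⟩
  have hxr : ‖x t‖ < r := hx.1.norm_lt_of_lyapunov (hV.differentiable one_ne_zero) hdec hVm
    (hx0.trans_le (min_le_right _ _))
    (hball (mem_ball_zero_iff.2 (hx0.trans_le (min_le_left _ _)))) ht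
  exact hxr.trans_le (min_le_left _ _)

theorem stmt_1 {n : ℕ} (f : EuclideanSpace ℝ (Fin n) → EuclideanSpace ℝ (Fin n))
    (V : EuclideanSpace ℝ (Fin n) → ℝ)
    (hf : LocallyLipschitz f) (hV : ContDiff ℝ 1 V) (hV0 : V 0 = 0) (hf0 : f 0 = 0)
    (hlyap : ∃ γ > (0:ℝ), ∀ x : EuclideanSpace ℝ (Fin n), 0 < ‖x‖ → ‖x‖ ≤ γ →
      0 < V x ∧ ⟪gradient V x, f x⟫ ≤ 0) :
    ∀ ε > (0:ℝ), ∃ δ > (0:ℝ), ∀ (x : ℝ → EuclideanSpace ℝ (Fin n)) (T : ℝ≥0∞),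
      IsMaxSol f x T → ‖x 0‖ < δ → ∀ t ∈ Ico0 T, ‖x t‖ < ε :=
  stmt_1_general f V hV hV0 hf0 hlyap
end
end

section
/- Suppose there exist positive constants k₁, k₂, k₃ and γ > 0, and a continuously differentiable V : ℝ^n → ℝ such that for all x with ‖x‖ ≤ γ: k₁²‖x‖² ≤ V(x) ≤ k₂²‖x‖² and ⟨∇V(x), f(x)⟩ ≤ -2k₃ V(x). Then the origin of x' = f(x) is exponentially stable with scaling constant α = k₂/k₁ and decay rate β = k₃: for every right-maximal solution x(t) on [0,T) with ‖x(0)‖ < (k₁/k₂)γ, we have ‖x(t)‖ ≤ (k₂/k₁)‖x(0)‖ exp(-k₃ t) for all t ∈ [0,T). -/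
open Set Filter Topology Metric
open scoped ENNReal RealInnerProductSpace

noncomputable section

/-!
Along a solution staying in the ball of radius `γ`, the decay condition says that
`V (x t) * exp (2 k₃ t)` is nonincreasing (Grönwall), and the two quadratic bounds on `V` turn
`V (x t) ≤ V (x 0) exp (-2 k₃ t)` into `k₁ ‖x t‖ ≤ k₂ ‖x 0‖ exp (-k₃ t)`. Since
`‖x 0‖ < (k₁ / k₂) γ`, this bound stays below `γ`, so the solution can never reach the sphere of
radius `γ`: at the first time it did, the estimate would already apply and give `‖x‖ < γ`.
-/

theorem ContinuousOn.lt_of_forall_le_imp_lt {u : ℝ → ℝ} {a b γ : ℝ}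
    (hu : ContinuousOn u (Icc a b))
    (ha : u a < γ) (h : ∀ t ∈ Icc a b, (∀ s ∈ Icc a t, u s ≤ γ) → u t < γ) :
    ∀ t ∈ Icc a b, u t < γ := by
  by_contra! hex
  set S := {t ∈ Icc a b | γ ≤ u t}
  have hSne : S.Nonempty := hex
  have hSbdd : BddBelow S := ⟨a, fun s hs => hs.1.1⟩
  have hSclosed : IsClosed S := hu.preimage_isClosed_of_isClosed isClosed_Icc isClosed_Ici
  set t₁ := sInf S
  obtain ⟨ht₁, hγt₁⟩ : t₁ ∈ S := hSclosed.csInf_mem hSne hSbdd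
  have hbefore : ∀ s ∈ Icc a t₁, s < t₁ → u s < γ := fun s hs hst =>
    lt_of_not_ge fun hγs => (csInf_le hSbdd ⟨⟨hs.1, hst.le.trans ht₁.2⟩, hγs⟩).not_gt hst
  -- `u` crosses `γ` somewhere in `[a, t₁]`, and only `t₁` itself can be that point
  obtain ⟨c, hc, huc⟩ : γ ∈ u '' Icc a t₁ :=
    intermediate_value_Icc ht₁.1 (hu.mono (Icc_subset_Icc_right ht₁.2)) ⟨ha.le, hγt₁⟩
  have hct₁ : c = t₁ := hc.2.eq_of_not_lt fun hlt => (hbefore c hc hlt).ne huc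
  have hbelow : ∀ s ∈ Icc a t₁, u s ≤ γ := fun s hs =>
    hs.2.lt_or_eq.elim (fun hlt => (hbefore s hs hlt).le) fun heq => heq ▸ hct₁ ▸ huc.le
  exact (h t₁ ht₁ hbelow).not_ge hγt₁

theorem le_div_mul_mul_exp_of_sq_mul_sq_le {a b k₁ k₂ k₃ t : ℝ} (ha : 0 ≤ a) (hb : 0 ≤ b)
    (hk₁ : 0 < k₁) (hk₂ : 0 < k₂)
    (h : k₁ ^ 2 * a ^ 2 ≤ k₂ ^ 2 * b ^ 2 * Real.exp (-2 * k₃ * t)) :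
    a ≤ k₂ / k₁ * b * Real.exp (-k₃ * t) := by
  have hsq : (k₁ * a) ^ 2 ≤ (k₂ * b * Real.exp (-k₃ * t)) ^ 2 := by
    have hexp : Real.exp (-2 * k₃ * t) = Real.exp (-k₃ * t) ^ 2 := by
      rw [← Real.exp_nat_mul]
      ring_nf
    rw [hexp] at h
    linarith
  have := (pow_le_pow_iff_left₀ (by positivity) (by positivity) two_ne_zero).mp hsq
  rw [div_mul_eq_mul_div, div_mul_eq_mul_div, le_div_iff₀ hk₁]
  linarith

theorem norm_lt_of_lt_div_mul {E : Type*} [NormedAddCommGroup E] [NormedSpace ℝ E]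
    {V : E → ℝ} {k₁ k₂ γ : ℝ} (hk₁ : 0 < k₁) (hk₂ : 0 < k₂)
    (hlow : ∀ y : E, ‖y‖ ≤ γ → k₁ ^ 2 * ‖y‖ ^ 2 ≤ V y)
    (hup : ∀ y : E, ‖y‖ ≤ γ → V y ≤ k₂ ^ 2 * ‖y‖ ^ 2) {x₀ : E} (hx₀ : ‖x₀‖ < k₁ / k₂ * γ) :
    ‖x₀‖ < γ := by
  by_contra! hγx₀
  have hγ : 0 < γ := pos_of_mul_pos_right ((norm_nonneg _).trans_lt hx₀) (by positivity)
  -- rescale `x₀` to the sphere of radius `γ`, where the two bounds force `k₁ ≤ k₂`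
  set y := (γ / ‖x₀‖) • x₀
  have hy : ‖y‖ = γ := by
    rw [norm_smul, Real.norm_of_nonneg (by positivity), div_mul_cancel₀ _ (hγ.trans_le hγx₀).ne']
  have hsq : k₁ ^ 2 * γ ^ 2 ≤ k₂ ^ 2 * γ ^ 2 := hy ▸ (hlow y hy.le).trans (hup y hy.le)
  have hk : k₁ ≤ k₂ := (pow_le_pow_iff_left₀ hk₁.le hk₂.le two_ne_zero).mp
    (le_of_mul_le_mul_right hsq (by positivity))
  have : k₁ / k₂ * γ ≤ γ := mul_le_of_le_one_left hγ.le ((div_le_one hk₂).mpr hk)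
  linarith

section Lyapunov

variable {E : Type*} [NormedAddCommGroup E] [InnerProductSpace ℝ E] [CompleteSpace E]
  {f : E → E} {V : E → ℝ} {x : ℝ → E} {k₁ k₂ k₃ γ : ℝ}

theorem le_mul_exp_of_inner_gradient_le {t : ℝ} (ht : 0 ≤ t) (hV : Differentiable ℝ V)
    (hx : ∀ s ∈ Icc 0 t, HasDerivAt x (f (x s)) s)
    (hdecay : ∀ s ∈ Icc 0 t, ⟪gradient V (x s), f (x s)⟫ ≤ -2 * k₃ * V (x s)) :
    V (x t) ≤ V (x 0) * Real.exp (-2 * k₃ * t) := by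
  have hVx : ∀ s ∈ Icc 0 t, HasDerivAt (fun τ => V (x τ)) ⟪gradient V (x s), f (x s)⟫ s :=
    fun s hs => (hV _).hasGradientAt.hasFDerivAt.comp_hasDerivAt s (hx s hs)
  have := le_gronwallBound_of_liminf_deriv_right_le (K := -2 * k₃) (ε := 0)
    (fun s hs => (hVx s hs).continuousAt.continuousWithinAt)
    (fun s hs _ hr => (hVx s (Ico_subset_Icc_self hs)).hasDerivWithinAt.liminf_right_slope_le hr)
    le_rfl (fun s hs => (hdecay s (Ico_subset_Icc_self hs)).trans_eq (add_zero _).symm)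
    t ⟨ht, le_rfl⟩
  simpa [gronwallBound_ε0] using this

theorem norm_le_mul_exp_of_forall_norm_le {t : ℝ} (ht : 0 ≤ t) (hV : Differentiable ℝ V)
    (hk₁ : 0 < k₁) (hk₂ : 0 < k₂)
    (hlow : ∀ y : E, ‖y‖ ≤ γ → k₁ ^ 2 * ‖y‖ ^ 2 ≤ V y)
    (hup : ∀ y : E, ‖y‖ ≤ γ → V y ≤ k₂ ^ 2 * ‖y‖ ^ 2)
    (hdecay : ∀ y : E, ‖y‖ ≤ γ → ⟪gradient V y, f y⟫ ≤ -2 * k₃ * V y)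
    (hx : ∀ s ∈ Icc 0 t, HasDerivAt x (f (x s)) s) (hxγ : ∀ s ∈ Icc 0 t, ‖x s‖ ≤ γ) :
    ‖x t‖ ≤ k₂ / k₁ * ‖x 0‖ * Real.exp (-k₃ * t) := by
  have hV_decay : V (x t) ≤ V (x 0) * Real.exp (-2 * k₃ * t) :=
    le_mul_exp_of_inner_gradient_le ht hV hx fun s hs => hdecay _ (hxγ s hs)
  refine le_div_mul_mul_exp_of_sq_mul_sq_le (norm_nonneg _) (norm_nonneg _) hk₁ hk₂ ?_
  calc k₁ ^ 2 * ‖x t‖ ^ 2 ≤ V (x t) := hlow _ (hxγ t ⟨ht, le_rfl⟩)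
    _ ≤ V (x 0) * Real.exp (-2 * k₃ * t) := hV_decay
    _ ≤ k₂ ^ 2 * ‖x 0‖ ^ 2 * Real.exp (-2 * k₃ * t) := by
      gcongr
      exact hup _ (hxγ 0 ⟨le_rfl, ht⟩)

theorem norm_le_mul_exp_of_norm_lt {t : ℝ} (ht : 0 ≤ t) (hV : Differentiable ℝ V)
    (hk₁ : 0 < k₁) (hk₂ : 0 < k₂) (hk₃ : 0 ≤ k₃)
    (hlow : ∀ y : E, ‖y‖ ≤ γ → k₁ ^ 2 * ‖y‖ ^ 2 ≤ V y)
    (hup : ∀ y : E, ‖y‖ ≤ γ → V y ≤ k₂ ^ 2 * ‖y‖ ^ 2)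
    (hdecay : ∀ y : E, ‖y‖ ≤ γ → ⟪gradient V y, f y⟫ ≤ -2 * k₃ * V y)
    (hx : ∀ s ∈ Icc 0 t, HasDerivAt x (f (x s)) s) (hx₀ : ‖x 0‖ < k₁ / k₂ * γ) :
    ‖x t‖ ≤ k₂ / k₁ * ‖x 0‖ * Real.exp (-k₃ * t) := by
  have hbound : k₂ / k₁ * ‖x 0‖ < γ :=
    calc k₂ / k₁ * ‖x 0‖ < k₂ / k₁ * (k₁ / k₂ * γ) := by gcongr
      _ = γ := by field_simp
  have hstay : ∀ τ ∈ Icc 0 t, ‖x τ‖ < γ := by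
    refine ContinuousOn.lt_of_forall_le_imp_lt
      (fun s hs => (hx s hs).continuousAt.norm.continuousWithinAt)
      (norm_lt_of_lt_div_mul hk₁ hk₂ hlow hup hx₀) fun τ hτ hxγ => ?_
    have hdecayτ := norm_le_mul_exp_of_forall_norm_le hτ.1 hV hk₁ hk₂ hlow hup hdecay
      (fun s hs => hx s ⟨hs.1, hs.2.trans hτ.2⟩) hxγ
    calc ‖x τ‖ ≤ k₂ / k₁ * ‖x 0‖ * Real.exp (-k₃ * τ) := hdecayτ
      _ ≤ k₂ / k₁ * ‖x 0‖ := mul_le_of_le_one_right (by positivity)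
        (Real.exp_le_one_iff.mpr (by nlinarith [hτ.1]))
      _ < γ := hbound
  exact norm_le_mul_exp_of_forall_norm_le ht hV hk₁ hk₂ hlow hup hdecay hx
    fun s hs => (hstay s hs).le

end Lyapunov

theorem stmt_2_general {n : ℕ} (f : EuclideanSpace ℝ (Fin n) → EuclideanSpace ℝ (Fin n))
    (V : EuclideanSpace ℝ (Fin n) → ℝ) (k₁ k₂ k₃ γ : ℝ)
    (hV : ContDiff ℝ 1 V)
    (hk₁ : 0 < k₁) (hk₂ : 0 < k₂) (hk₃ : 0 < k₃)
    (hbound : ∀ x : EuclideanSpace ℝ (Fin n), ‖x‖ ≤ γ →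
      k₁^2 * ‖x‖^2 ≤ V x ∧ V x ≤ k₂^2 * ‖x‖^2 ∧ ⟪gradient V x, f x⟫ ≤ -2 * k₃ * V x) :
    ∀ (x : ℝ → EuclideanSpace ℝ (Fin n)) (T : ℝ≥0∞),
      IsMaxSol f x T → ‖x 0‖ < (k₁ / k₂) * γ →
        ∀ t ∈ Ico0 T, ‖x t‖ ≤ (k₂ / k₁) * ‖x 0‖ * Real.exp (-k₃ * t) := by
  intro x T hx hx₀ t ht
  have hsol : ∀ s ∈ Icc 0 t, HasDerivAt x (f (x s)) s := fun s hs =>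
    hx.1 s ⟨hs.1, (ENNReal.ofReal_le_ofReal hs.2).trans_lt ht.2⟩
  exact norm_le_mul_exp_of_norm_lt ht.1 (hV.differentiable one_ne_zero) hk₁ hk₂ hk₃.le
    (fun y hy => (hbound y hy).1) (fun y hy => (hbound y hy).2.1)
    (fun y hy => (hbound y hy).2.2) hsol hx₀

theorem stmt_2 {n : ℕ} (f : EuclideanSpace ℝ (Fin n) → EuclideanSpace ℝ (Fin n))
    (V : EuclideanSpace ℝ (Fin n) → ℝ) (k₁ k₂ k₃ γ : ℝ)
    (hf : LocallyLipschitz f) (hV : ContDiff ℝ 1 V)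
    (hk₁ : 0 < k₁) (hk₂ : 0 < k₂) (hk₃ : 0 < k₃) (hγ : 0 < γ)
    (hbound : ∀ x : EuclideanSpace ℝ (Fin n), ‖x‖ ≤ γ →
      k₁^2 * ‖x‖^2 ≤ V x ∧ V x ≤ k₂^2 * ‖x‖^2 ∧ ⟪gradient V x, f x⟫ ≤ -2 * k₃ * V x) :
    ∀ (x : ℝ → EuclideanSpace ℝ (Fin n)) (T : ℝ≥0∞),
      IsMaxSol f x T → ‖x 0‖ < (k₁ / k₂) * γ →
        ∀ t ∈ Ico0 T, ‖x t‖ ≤ (k₂ / k₁) * ‖x 0‖ * Real.exp (-k₃ * t) :=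
  stmt_2_general f V k₁ k₂ k₃ γ hV hk₁ hk₂ hk₃ hbound
end
end

section
/- For the inverted pendulum with PD control, i.e., the ODE θ' = ω, ω' = aθ - bω - (k₁θ + k₂ω), with parameters a > 0, b ≥ 0, k₁ > a, k₂ > -b, the function v(θ,ω) = (k₁ - a)θ²/2 + (((b + k₂)θ + ω)² + ω²)/4 satisfies v(0,0) = 0, v(θ,ω) > 0 for (θ,ω) ≠ (0,0), and its Lie derivative along the ODE is strictly negative for (θ,ω) ≠ (0,0). -/
/-! The square ((b + k₂)θ + ω)² in `vInv` is weighted so that every θω term cancels in the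
Lie derivative, which reduces to -(b + k₂)/2 · ((k₁ - a)θ² + ω²). Since b + k₂ > 0 and
k₁ > a, both `vInv` and minus its Lie derivative dominate a positive definite form
c θ² + ω². -/

open Real

noncomputable section

/-- Lyapunov function for the inverted pendulum with PD control. -/
def vInv (a b k₁ k₂ θ ω : ℝ) : ℝ :=
  (k₁ - a) * θ^2 / 2 + (((b + k₂) * θ + ω)^2 + ω^2) / 4

theorem mul_sq_add_sq_pos {c x y : ℝ} (hc : 0 < c) (hxy : (x, y) ≠ (0, 0)) :
    0 < c * x ^ 2 + y ^ 2 := by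
  rcases eq_or_ne x 0 with rfl | hx
  · have hy : y ≠ 0 := fun hy => hxy (by rw [hy])
    simpa using (by positivity : 0 < y ^ 2)
  · exact add_pos_of_pos_of_nonneg (by positivity) (sq_nonneg y)

theorem hasDerivAt_vInv_theta (a b k₁ k₂ θ ω : ℝ) :
    HasDerivAt (fun θ' => vInv a b k₁ k₂ θ' ω)
      ((k₁ - a) * θ + (b + k₂) * ((b + k₂) * θ + ω) / 2) θ := by
  unfold vInv
  refine ((((hasDerivAt_id' θ).fun_pow 2).const_mul (k₁ - a)).div_const 2 |>.fun_add
    (((((hasDerivAt_id' θ).const_mul (b + k₂)).add_const ω).fun_pow 2).add_const (ω ^ 2)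
      |>.div_const 4)).congr_deriv ?_
  ring

theorem hasDerivAt_vInv_omega (a b k₁ k₂ θ ω : ℝ) :
    HasDerivAt (fun ω' => vInv a b k₁ k₂ θ ω') (((b + k₂) * θ + 2 * ω) / 2) ω := by
  unfold vInv
  refine ((((hasDerivAt_id' ω).const_add ((b + k₂) * θ)).fun_pow 2).fun_add
    ((hasDerivAt_id' ω).fun_pow 2) |>.div_const 4 |>.const_add ((k₁ - a) * θ ^ 2 / 2)).congr_deriv ?_
  ring

theorem vInv_pos {a k₁ : ℝ} (b k₂ : ℝ) (hk₁ : a < k₁) {θ ω : ℝ} (h : (θ, ω) ≠ (0, 0)) :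
    0 < vInv a b k₁ k₂ θ ω := by
  have := mul_sq_add_sq_pos (c := 2 * (k₁ - a)) (by linarith) h
  unfold vInv
  linarith [sq_nonneg ((b + k₂) * θ + ω)]

theorem lieDeriv_vInv (a b k₁ k₂ θ ω : ℝ) :
    deriv (fun θ' => vInv a b k₁ k₂ θ' ω) θ * ω +
      deriv (fun ω' => vInv a b k₁ k₂ θ ω') ω * (a * θ - b * ω - (k₁ * θ + k₂ * ω)) =
      -((b + k₂) / 2 * ((k₁ - a) * θ ^ 2 + ω ^ 2)) := by
  rw [(hasDerivAt_vInv_theta a b k₁ k₂ θ ω).deriv, (hasDerivAt_vInv_omega a b k₁ k₂ θ ω).deriv]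
  ring

theorem stmt_10_general (a b k₁ k₂ : ℝ) (hk₁ : a < k₁) (hk₂ : -b < k₂) :
    vInv a b k₁ k₂ 0 0 = 0 ∧
    (∀ θ ω : ℝ, (θ, ω) ≠ (0, 0) → 0 < vInv a b k₁ k₂ θ ω) ∧
    (∀ θ ω : ℝ, (θ, ω) ≠ (0, 0) →
      deriv (fun θ' => vInv a b k₁ k₂ θ' ω) θ * ω +
      deriv (fun ω' => vInv a b k₁ k₂ θ ω') ω * (a * θ - b * ω - (k₁ * θ + k₂ * ω)) < 0) := by
  refine ⟨by simp [vInv], fun θ ω h => vInv_pos b k₂ hk₁ h, fun θ ω h => ?_⟩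
  rw [lieDeriv_vInv, neg_neg_iff_pos]
  exact mul_pos (by linarith) (mul_sq_add_sq_pos (sub_pos.mpr hk₁) h)

theorem stmt_10 (a b k₁ k₂ : ℝ) (ha : 0 < a) (hb : 0 ≤ b) (hk₁ : a < k₁) (hk₂ : -b < k₂) :
    vInv a b k₁ k₂ 0 0 = 0 ∧
    (∀ θ ω : ℝ, (θ, ω) ≠ (0, 0) → 0 < vInv a b k₁ k₂ θ ω) ∧
    (∀ θ ω : ℝ, (θ, ω) ≠ (0, 0) →
      deriv (fun θ' => vInv a b k₁ k₂ θ' ω) θ * ω +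
      deriv (fun ω' => vInv a b k₁ k₂ θ ω') ω * (a * θ - b * ω - (k₁ * θ + k₂ * ω)) < 0) :=
  stmt_10_general a b k₁ k₂ hk₁ hk₂
end
end

section
/- Escape from compact staging sets: let x(t) be a right-maximal solution of x' = f(x) on [0,T), S ⊆ ℝ^n compact, and p : ℝ^n → ℝ continuously differentiable with ⟨∇p(x), f(x)⟩ > 0 for all x ∈ S. Suppose that for all t ∈ [0,T), if x(s) ∉ G for all s ∈ [0,t] then x(t) ∈ S, where G ⊆ ℝ^n. Then there exists t ∈ [0,T) with x(t) ∈ G. -/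
open Set Filter Topology Metric
open scoped ENNReal RealInnerProductSpace

noncomputable section

/-!
If `x` never reaches `G`, it stays in the compact set `S` for all of `[0, T)`. When `T = ∞` this is
impossible: `⟪∇p, f⟫` has a positive minimum `c` on `S`, so `p ∘ x` grows at least like `c t`,
while `p` is bounded on `S`. When `T < ∞` it is impossible as well: `f` is Lipschitz and bounded
near `S`, so Picard–Lindelöf gives solutions through every point of `S` on a time interval of
uniform length, and gluing one of them to `x` shortly before `T` contradicts maximality.
-/

open scoped NNReal

section PicardLindelof

variable {E : Type*} [NormedAddCommGroup E] [NormedSpace ℝ E]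

theorem IsPicardLindelof.exists_eq_forall_mem_Icc_hasDerivWithinAt_mem_closedBall
    [CompleteSpace E] {f : ℝ → E → E} {tmin tmax : ℝ} {t₀ : Icc tmin tmax} {x₀ x : E}
    {a r L K : ℝ≥0} (hf : IsPicardLindelof f t₀ x₀ a r L K) (hx : x ∈ closedBall x₀ r) :
    ∃ α : ℝ → E, α t₀ = x ∧ ∀ t ∈ Icc tmin tmax,
      HasDerivWithinAt α (f t (α t)) (Icc tmin tmax) t ∧ α t ∈ closedBall x₀ a := by
  obtain ⟨α, hα⟩ := ODE.FunSpace.exists_isFixedPt_next hf hx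
  refine ⟨α.compProj, by rw [ODE.FunSpace.compProj_val, ← hα, ODE.FunSpace.next_apply₀],
    fun t ht => ⟨?_, α.compProj_mem_closedBall hf.mul_max_le⟩⟩
  refine ODE.hasDerivWithinAt_picard_Icc t₀.2 hf.continuousOn_uncurry
    α.continuous_compProj.continuousOn (fun _ _ => α.compProj_mem_closedBall hf.mul_max_le)
    x ht |>.congr_of_mem (fun t' ht' => ?_) ht
  nth_rw 1 [← hα]
  rw [ODE.FunSpace.compProj_of_mem ht', ODE.FunSpace.next_apply]

/-- Near a compact set, a locally Lipschitz field is Lipschitz and bounded, which makes the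
existence time of Picard–Lindelöf uniform. -/
theorem LocallyLipschitz.exists_pos_forall_exists_hasDerivAt_mem_cthickening [ProperSpace E]
    {f : E → E} (hf : LocallyLipschitz f) {K : Set E} (hK : IsCompact K) :
    ∃ ε > 0, ∀ x₀ ∈ K, ∀ t₀ : ℝ, ∃ α : ℝ → E, α t₀ = x₀ ∧
      ∀ t ∈ Ioo (t₀ - ε) (t₀ + ε), HasDerivAt α (f (α t)) t ∧ α t ∈ cthickening 1 K := by
  have hK₁ : IsCompact (cthickening 1 K) := hK.cthickening
  obtain ⟨L, hL⟩ := hf.locallyLipschitzOn.exists_lipschitzOnWith_of_compact hK₁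
  obtain ⟨C, hC⟩ := hK₁.exists_bound_of_continuousOn hf.continuous.continuousOn
  set M : ℝ≥0 := C.toNNReal
  refine ⟨1 / (M + 1), by positivity, fun x₀ hx₀ t₀ => ?_⟩
  have hball : closedBall x₀ (1 : ℝ≥0) ⊆ cthickening 1 K := closedBall_subset_cthickening hx₀ 1
  have hPL : IsPicardLindelof (fun _ => f) (tmin := t₀ - 1 / (M + 1)) (tmax := t₀ + 1 / (M + 1))
      ⟨t₀, by constructor <;> linarith [show (0 : ℝ) < 1 / (M + 1) by positivity]⟩ x₀ 1 0 M L := by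
    refine .of_time_independent (fun y hy => (hC y (hball hy)).trans (Real.le_coe_toNNReal C))
      (hL.mono hball) ?_
    have hM : (M : ℝ) / (M + 1) ≤ 1 := (div_le_one (by positivity)).2 (by linarith)
    simpa [div_eq_mul_inv] using hM
  obtain ⟨α, hα₀, hα⟩ :=
    hPL.exists_eq_forall_mem_Icc_hasDerivWithinAt_mem_closedBall (mem_closedBall_self le_rfl)
  refine ⟨α, hα₀, fun t ht => ⟨?_, hball (hα t (Ioo_subset_Icc_self ht)).2⟩⟩
  exact (hα t (Ioo_subset_Icc_self ht)).1.hasDerivAt (Icc_mem_nhds ht.1 ht.2)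

end PicardLindelof

theorem exists_nonneg_notMem_of_inner_gradient_pos {E : Type*} [NormedAddCommGroup E]
    [InnerProductSpace ℝ E] [CompleteSpace E] {f : E → E} {p : E → ℝ} {S : Set E}
    (hf : Continuous f) (hS : IsCompact S) (hp : ContDiff ℝ 1 p)
    (hprog : ∀ y ∈ S, 0 < ⟪gradient p y, f y⟫) {x : ℝ → E}
    (hx : ∀ t, 0 ≤ t → HasDerivAt x (f (x t)) t) :
    ∃ t, 0 ≤ t ∧ x t ∉ S := by
  by_contra! hxS
  have hcont : Continuous fun y => ⟪gradient p y, f y⟫ := by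
    simpa only [inner_gradient_left] using (hp.continuous_fderiv one_ne_zero).clm_apply hf
  obtain ⟨c, hc, hcS⟩ := hS.exists_forall_le' hcont.continuousOn hprog
  obtain ⟨M, hM⟩ := hS.bddAbove_image hp.continuous.continuousOn
  have hderiv : ∀ t, 0 ≤ t → HasDerivAt (p ∘ x) ⟪gradient p (x t), f (x t)⟫ t := fun t ht => by
    rw [inner_gradient_left]
    exact (hp.differentiable one_ne_zero (x t)).hasFDerivAt.comp_hasDerivAt t (hx t ht)
  have hgrowth : ∀ t, 0 ≤ t → c * t ≤ p (x t) - p (x 0) := fun t ht => by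
    simpa using (convex_Ici (0 : ℝ)).mul_sub_le_image_sub_of_le_deriv
      (fun s hs => (hderiv s hs).continuousAt.continuousWithinAt)
      (fun s hs => (hderiv s (interior_subset hs)).differentiableAt.differentiableWithinAt)
      (fun s hs => (hderiv s (interior_subset hs)).deriv ▸ hcS _ (hxS s (interior_subset hs)))
      0 self_mem_Ici t ht ht
  set t := (M - p (x 0)) / c + 1
  have ht : 0 ≤ t := by
    have : p (x 0) ≤ M := hM ⟨x 0, hxS 0 le_rfl, rfl⟩
    positivity
  have hct : c * t = M - p (x 0) + c := by rw [mul_add, mul_div_cancel₀ _ hc.ne', mul_one]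
  linarith [hgrowth t ht, hM ⟨x t, hxS t ht, rfl⟩]

section MaximalSolution

variable {n : ℕ} {f : EuclideanSpace ℝ (Fin n) → EuclideanSpace ℝ (Fin n)}
  {x z : ℝ → EuclideanSpace ℝ (Fin n)} {T : ℝ≥0∞}

theorem Ico0_ofReal (τ : ℝ) : Ico0 (ENNReal.ofReal τ) = Ico 0 τ := by
  ext t
  simp only [Ico0, mem_ofPred_eq, mem_Ico, and_congr_right_iff]
  intro ht
  rw [ENNReal.ofReal_lt_ofReal_iff']
  exact ⟨And.left, fun h => ⟨h, ht.trans_lt h⟩⟩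

theorem IsSolOn.piecewise {Tr t₀ τ : ℝ} (hx : IsSolOn f x (ENNReal.ofReal Tr))
    (hz : ∀ t ∈ Ioo t₀ τ, HasDerivAt z (f (z t)) t) (ht₀ : t₀ < Tr)
    (hxz : EqOn x z (Ico t₀ Tr)) :
    IsSolOn f (fun t => if t < Tr then x t else z t) (ENNReal.ofReal τ) := by
  have hyz : EqOn (fun t => if t < Tr then x t else z t) z (Ioi t₀) := fun t ht => by
    by_cases h : t < Tr
    · simpa [h] using hxz ⟨le_of_lt ht, h⟩
    · simp [h]
  rw [IsSolOn, Ico0_ofReal]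
  rintro t ⟨ht0, htτ⟩
  by_cases h : t < Tr
  · have hyx : (fun t => if t < Tr then x t else z t) =ᶠ[𝓝 t] x :=
      eventually_of_mem (Iio_mem_nhds h) fun s hs => if_pos hs
    rw [if_pos h]
    exact (hx t (by rw [Ico0_ofReal]; exact ⟨ht0, h⟩)).congr_of_eventuallyEq hyx
  · have ht : t₀ < t := ht₀.trans_le (not_lt.1 h)
    rw [if_neg h]
    exact (hz t ⟨ht, htτ⟩).congr_of_eventuallyEq (eventually_of_mem (Ioi_mem_nhds ht) hyz)

theorem IsMaxSol.ne_zero (hsol : IsMaxSol f x T) (hf : LocallyLipschitz f) : T ≠ 0 := by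
  rintro rfl
  obtain ⟨ε, hε, hloc⟩ := hf.exists_pos_forall_exists_hasDerivAt_mem_cthickening isCompact_singleton
  obtain ⟨z, -, hz⟩ := hloc 0 rfl 0
  refine hsol.2 z (ENNReal.ofReal ε) (ENNReal.ofReal_pos.2 hε) ?_ fun t ht => ?_
  · rw [IsSolOn, Ico0_ofReal]
    exact fun t ht => (hz t ⟨by linarith [ht.1], by linarith [ht.2]⟩).1
  · exact absurd ht.2 (ENNReal.not_lt_zero)

theorem IsMaxSol.exists_notMem_of_isCompact (hsol : IsMaxSol f x T) (hf : LocallyLipschitz f)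
    (hT : T ≠ ⊤) {K : Set (EuclideanSpace ℝ (Fin n))} (hK : IsCompact K) :
    ∃ t ∈ Ico0 T, x t ∉ K := by
  by_contra! hxK
  have hTr : 0 < T.toReal := ENNReal.toReal_pos (hsol.ne_zero hf) hT
  rw [← ENNReal.ofReal_toReal hT] at hsol hxK
  rw [Ico0_ofReal] at hxK
  generalize T.toReal = Tr at hsol hxK hTr
  obtain ⟨ε, hε, hloc⟩ := hf.exists_pos_forall_exists_hasDerivAt_mem_cthickening hK
  obtain ⟨L, hL⟩ :=
    hf.locallyLipschitzOn.exists_lipschitzOnWith_of_compact (hK.cthickening (r := 1))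
  set t₀ := Tr - min ε Tr / 2 with ht₀_def
  have hmin : 0 < min ε Tr := lt_min hε hTr
  have ht₀ : t₀ ∈ Ioo (max 0 (t₀ - ε)) Tr := by
    constructor
    · exact max_lt (by linarith [min_le_right ε Tr]) (by linarith)
    · linarith
  have hTr_lt : Tr < t₀ + ε := by linarith [min_le_left ε Tr]
  obtain ⟨z, hz₀, hz⟩ := hloc (x t₀) (hxK t₀ ⟨by linarith [min_le_right ε Tr], ht₀.2⟩) t₀
  have hxz : EqOn x z (Ioo (max 0 (t₀ - ε)) Tr) :=
    ODE_solution_unique_of_mem_Ioo (v := fun _ => f) (s := fun _ => cthickening 1 K)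
      (fun _ _ => hL) ht₀
      (fun t ht => ⟨hsol.1 t (by rw [Ico0_ofReal]; exact ⟨(le_max_left _ _).trans ht.1.le, ht.2⟩),
        self_subset_cthickening K (hxK t ⟨(le_max_left _ _).trans ht.1.le, ht.2⟩)⟩)
      (fun t ht => hz t ⟨(le_max_right _ _).trans_lt ht.1, ht.2.trans hTr_lt⟩) hz₀.symm
  refine hsol.2 _ (ENNReal.ofReal (t₀ + ε))
    ((ENNReal.ofReal_lt_ofReal_iff (by linarith)).2 hTr_lt)
    (hsol.1.piecewise (fun t ht => (hz t ⟨by linarith [ht.1], ht.2⟩).1) ht₀.2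
      (hxz.mono (Ico_subset_Ioo_left ht₀.1)))
    fun t ht => if_pos (by rw [Ico0_ofReal] at ht; exact ht.2)

end MaximalSolution

theorem stmt_18 {n : ℕ} (f : EuclideanSpace ℝ (Fin n) → EuclideanSpace ℝ (Fin n))
    (p : EuclideanSpace ℝ (Fin n) → ℝ)
    (S G : Set (EuclideanSpace ℝ (Fin n)))
    (hf : LocallyLipschitz f) (hS : IsCompact S) (hp : ContDiff ℝ 1 p)
    (hprog : ∀ y ∈ S, 0 < ⟪gradient p y, f y⟫)
    (x : ℝ → EuclideanSpace ℝ (Fin n)) (T : ℝ≥0∞) (hsol : IsMaxSol f x T)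
    (hstage : ∀ t ∈ Ico0 T, (∀ s, 0 ≤ s → s ≤ t → x s ∉ G) → x t ∈ S) :
    ∃ t ∈ Ico0 T, x t ∈ G := by
  by_contra! hG
  have hxS : ∀ t ∈ Ico0 T, x t ∈ S := fun t ht => hstage t ht fun s hs0 hst =>
    hG s ⟨hs0, (ENNReal.ofReal_le_ofReal hst).trans_lt ht.2⟩
  rcases eq_or_ne T ⊤ with rfl | hT
  · obtain ⟨t, ht, htS⟩ := exists_nonneg_notMem_of_inner_gradient_pos hf.continuous hS hp hprog
      fun t ht => hsol.1 t ⟨ht, ENNReal.ofReal_lt_top⟩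
    exact htS (hxS t ⟨ht, ENNReal.ofReal_lt_top⟩)
  · obtain ⟨t, ht, htS⟩ := hsol.exists_notMem_of_isCompact hf hT hS
    exact htS (hxS t ht)
end
end
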